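/- Let X be a subshift over a finite alphabet Λ, let ξ ∈ Ω_X, let g ∈ ξ, and let β be a finite word. If gβ⁻¹ ∈ ξ, then the stem of ξ at g satisfies σ_g(ξ) ∈ F_β. Moreover, if ξ = ξ_x for some x ∈ X, then the converse holds: σ_g(ξ) ∈ F_β implies gβ⁻¹ ∈ ξ. -/

import Mathlib

open scoped Classical

namespace SubshiftPaper

variable {Λ : Type}

/-- The left shift on infinite words. -/
def shiftMap (x : ℕ → Λ) : ℕ → Λ := fun n => x (n + 1)

/-- Concatenation of a finite word with an infinite word. -/
def cat (α : List Λ) (y : ℕ → Λ) : ℕ → Λ := fun n => α.getD n (y (n - α.length))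

/-- `α` is a prefix of the infinite word `x`. -/
def Pref (α : List Λ) (x : ℕ → Λ) : Prop := ∀ (i : ℕ) (h : i < α.length), x i = α[i]

/-- The tail of `x` after `n` letters. -/
def tail (x : ℕ → Λ) (n : ℕ) : ℕ → Λ := fun i => x (n + i)

/-- `α` occurs in `x` at position `n`. -/
def OccursAt (α : List Λ) (x : ℕ → Λ) (n : ℕ) : Prop :=
  ∀ (i : ℕ) (h : i < α.length), x (n + i) = α[i]

/-- `α` occurs in `x` (as a contiguous block of letters). -/
def Occurs (α : List Λ) (x : ℕ → Λ) : Prop := ∃ n, OccursAt α x n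

/-- `X` is a subshift: a nonempty closed shift-invariant subset. -/
def IsSubshift [TopologicalSpace Λ] (X : Set (ℕ → Λ)) : Prop :=
  X.Nonempty ∧ IsClosed X ∧ ∀ x ∈ X, shiftMap x ∈ X

/-- The set of infinite words avoiding all words in `F`. -/
def ForbidSpace (F : Set (List Λ)) : Set (ℕ → Λ) := {x | ∀ α ∈ F, ¬ Occurs α x}

/-- `X` is a subshift of finite type. -/
def IsSFT (X : Set (ℕ → Λ)) : Prop := ∃ F : Set (List Λ), F.Finite ∧ X = ForbidSpace F

/-- The follower set of a finite word. -/
def follower (X : Set (ℕ → Λ)) (α : List Λ) : Set (ℕ → Λ) := {y | y ∈ X ∧ cat α y ∈ X}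

/-- The cylinder of a finite word. -/
def cylinder (X : Set (ℕ → Λ)) (α : List Λ) : Set (ℕ → Λ) := {x | x ∈ X ∧ Pref α x}

/-- The language of `X`. -/
def Language (X : Set (ℕ → Λ)) : Set (List Λ) := {α | ∃ x ∈ X, Occurs α x}

/-- The embedding of finite words into the free group. -/
def wd (α : List Λ) : FreeGroup Λ := (α.map FreeGroup.of).prod

/-- Indicator function of a set of group elements. -/
noncomputable def chi (s : Set (FreeGroup Λ)) : FreeGroup Λ → Bool :=
  fun g => if g ∈ s then true else false

/-- The set `ξ_x ⊆ 𝔽`. -/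
def xiSet [DecidableEq Λ] (X : Set (ℕ → Λ)) (x : ℕ → Λ) : Set (FreeGroup Λ) :=
  {g | ∃ α β : List Λ, g = wd α * (wd β)⁻¹ ∧
        FreeGroup.norm g = α.length + β.length ∧
        Pref α x ∧ tail x α.length ∈ follower X α ∩ follower X β}

/-- `ξ_x` as an element of `2^𝔽`. -/
noncomputable def xiB [DecidableEq Λ] (X : Set (ℕ → Λ)) (x : ℕ → Λ) : FreeGroup Λ → Bool :=
  chi (xiSet X x)

/-- The spectrum `Ω_X`: the closure of `{ξ_x : x ∈ X}` in `2^𝔽`. -/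
noncomputable def Omega [DecidableEq Λ] (X : Set (ℕ → Λ)) : Set (FreeGroup Λ → Bool) :=
  closure ((fun x => xiB X x) '' X)

/-- Left translation of an element of `2^𝔽`. -/
def translate (g : FreeGroup Λ) (ξ : FreeGroup Λ → Bool) : FreeGroup Λ → Bool :=
  fun h => ξ (g⁻¹ * h)

/-- `x` is the stem of `ξ`: `ξ ∩ 𝔽₊` is exactly the set of prefixes of `x`. -/
def IsStem (ξ : FreeGroup Λ → Bool) (x : ℕ → Λ) : Prop :=
  {g | ξ g = true} ∩ {g | ∃ α : List Λ, g = wd α} =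
    {g | ∃ α : List Λ, g = wd α ∧ Pref α x}

/-- `x` is the stem of `ξ` at `g`: `ξ ∩ g𝔽₊ = {gα : α is a prefix of x}`. -/
def IsStemAt (ξ : FreeGroup Λ → Bool) (g : FreeGroup Λ) (x : ℕ → Λ) : Prop :=
  {h | ξ h = true} ∩ {h | ∃ α : List Λ, h = g * wd α} =
    {h | ∃ α : List Λ, h = g * wd α ∧ Pref α x}

/-- The orbit of `ξ` under the spectral partial action. -/
def Orbit (ξ : FreeGroup Λ → Bool) : Set (FreeGroup Λ → Bool) :=
  {η | ∃ g : FreeGroup Λ, ξ g⁻¹ = true ∧ η = translate g ξ}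

/-- Topological freeness of the spectral partial action. -/
noncomputable def TopFree [DecidableEq Λ] (X : Set (ℕ → Λ)) : Prop :=
  ∀ g : FreeGroup Λ, g ≠ 1 →
    ∀ U : Set (FreeGroup Λ → Bool), IsOpen U →
      (U ∩ Omega X ⊆ {ξ | ξ g⁻¹ = true ∧ translate g ξ = ξ}) → U ∩ Omega X = ∅

/-- The periodic infinite word `γ^∞`. -/
noncomputable def perInf [Nonempty Λ] (γ : List Λ) : ℕ → Λ :=
  fun n => γ.getD (n % γ.length) (Classical.arbitrary Λ)

/-- `n`-fold concatenation of a finite word with itself. -/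
def rep : ℕ → List Λ → List Λ
  | 0, _ => []
  | n + 1, γ => γ ++ rep n γ

/-- `γ` is a circuit relative to `X`. -/
noncomputable def IsCircuit [Nonempty Λ] (X : Set (ℕ → Λ)) (γ : List Λ) : Prop :=
  γ ≠ [] ∧ perInf γ ∈ X

/-- `y` is an exit for the circuit `γ`. -/
noncomputable def IsExit [Nonempty Λ] (X : Set (ℕ → Λ)) (γ : List Λ) (y : ℕ → Λ) : Prop :=
  y ≠ perInf γ ∧ cat γ y ∈ X

/-- `z` is a strong exit for the circuit `γ`. -/
noncomputable def IsStrongExit [Nonempty Λ] (X : Set (ℕ → Λ)) (γ : List Λ) (z : ℕ → Λ) : Prop :=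
  z ≠ perInf γ ∧ ∀ n : ℕ, cat (rep n γ) z ∈ X

/-- The sets `X_g` of the standard partial action. -/
def Xg [DecidableEq Λ] (X : Set (ℕ → Λ)) (g : FreeGroup Λ) : Set (ℕ → Λ) :=
  {x | ∃ α β : List Λ, g = wd α * (wd β)⁻¹ ∧
        FreeGroup.norm g = α.length + β.length ∧
        ∃ y ∈ follower X α ∩ follower X β, x = cat α y}

/-- `x` is a fixed point for `θ_g`. -/
def IsThetaFixed [DecidableEq Λ] (X : Set (ℕ → Λ)) (g : FreeGroup Λ) (x : ℕ → Λ) : Prop :=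
  ∃ α β : List Λ, g = wd α * (wd β)⁻¹ ∧
    FreeGroup.norm g = α.length + β.length ∧
    ∃ y ∈ follower X α ∩ follower X β, x = cat β y ∧ cat α y = x

/-- `x` may be collectively reached from the finite set `B`. -/
def CollReached (X : Set (ℕ → Λ)) (B : Finset (List Λ)) (x : ℕ → Λ) : Prop :=
  ∃ α γ : List Λ, Pref α x ∧ ∀ β ∈ B, cat (β ++ γ) (tail x α.length) ∈ X

/-- `X` is collectively cofinal. -/
def CollCofinal (X : Set (ℕ → Λ)) : Prop :=
  ∀ B : Finset (List Λ), ↑B ⊆ Language X → (⋂ β ∈ B, follower X β).Nonempty →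
    ∀ x ∈ X, CollReached X B x

/-- `X` is strongly cofinal. -/
def StrongCofinal (X : Set (ℕ → Λ)) : Prop :=
  ∀ β ∈ Language X, ∃ M : ℕ, ∀ x ∈ X, ∃ α γ : List Λ, Pref α x ∧
    cat (β ++ γ) (tail x α.length) ∈ X ∧ α.length + γ.length ≤ M

/-- The even shift. -/
def evenShift : Set (ℕ → Fin 2) :=
  ForbidSpace {w | ∃ n : ℕ, w = 0 :: (List.replicate (2 * n + 1) 1 ++ [0])}

/-!
Write `g ∈ ξ_x` in reduced form `g = αδ⁻¹`, with `x = αz`. A comparison of reduced words shows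
that `ξ_x ∩ g𝔽₊` consists of the `gγ` with `γ` a prefix of `δz`, so the stem of `ξ_x` at `g` is
`δz`; cancelling the common suffix of `α` and `βδ` puts `gβ⁻¹ = α(βδ)⁻¹` in reduced form and shows
that `gβ⁻¹ ∈ ξ_x` exactly when `βδz ∈ X`. This is the statement for `ξ = ξ_x`. For a general
`ξ ∈ Ω_X` with stem `y` at `g`, approximating `ξ` by some `ξ_x` on `{g, gβ⁻¹, gγ}` for a prefix
`γ` of `y` gives a point of `F_β` beginning with `γ`; as `F_β` is closed, `y ∈ F_β`.
-/

lemma exists_common_prefix {A : Type*} (l₁ l₂ : List A) :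
    ∃ t r₁ r₂, l₁ = t ++ r₁ ∧ l₂ = t ++ r₂ ∧ ∀ a ∈ r₁.head?, ∀ b ∈ r₂.head?, a ≠ b := by
  induction l₁ generalizing l₂ with
  | nil => exact ⟨[], [], l₂, rfl, rfl, by simp⟩
  | cons a l₁ ih =>
    rcases l₂ with _ | ⟨b, l₂⟩
    · exact ⟨[], a :: l₁, [], rfl, rfl, by simp⟩
    by_cases hab : a = b
    · obtain ⟨t, r₁, r₂, rfl, rfl, hr⟩ := ih l₂
      exact ⟨a :: t, r₁, r₂, rfl, by rw [hab]; rfl, hr⟩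
    · exact ⟨[], a :: l₁, b :: l₂, rfl, rfl, by simpa using hab⟩

section Words

lemma cat_eval_lt {α : List Λ} {y : ℕ → Λ} {n : ℕ} (h : n < α.length) : cat α y n = α[n] :=
  List.getD_eq_getElem _ _ h

lemma cat_eval_ge {α : List Λ} {y : ℕ → Λ} {n : ℕ} (h : α.length ≤ n) :
    cat α y n = y (n - α.length) :=
  List.getD_eq_default _ _ h

@[simp]
lemma cat_nil (y : ℕ → Λ) : cat [] y = y := by
  funext n
  simp [cat]

lemma cat_append (α β : List Λ) (y : ℕ → Λ) : cat (α ++ β) y = cat α (cat β y) := by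
  funext n
  rcases lt_or_ge n α.length with h₁ | h₁
  · rw [cat_eval_lt (by simp; omega), cat_eval_lt h₁, List.getElem_append_left h₁]
  rw [cat_eval_ge h₁]
  rcases lt_or_ge n (α.length + β.length) with h₂ | h₂
  · rw [cat_eval_lt (by simp; omega), cat_eval_lt (by omega), List.getElem_append_right h₁]
  · rw [cat_eval_ge (by simp; omega), cat_eval_ge (by omega), List.length_append, Nat.sub_add_eq]

@[simp]
lemma tail_cat (α : List Λ) (y : ℕ → Λ) : tail (cat α y) α.length = y := by
  funext i
  rw [tail, cat_eval_ge (by omega), Nat.add_sub_cancel_left]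

lemma tail_tail (x : ℕ → Λ) (m n : ℕ) : tail (tail x m) n = tail x (m + n) := by
  funext i
  simp [tail, Nat.add_assoc]

lemma pref_cat (α : List Λ) (y : ℕ → Λ) : Pref α (cat α y) :=
  fun _ h => cat_eval_lt h

lemma cat_tail_of_pref {α : List Λ} {x : ℕ → Λ} (h : Pref α x) : cat α (tail x α.length) = x := by
  funext n
  rcases lt_or_ge n α.length with h₁ | h₁
  · rw [cat_eval_lt h₁, h n h₁]
  · rw [cat_eval_ge h₁, tail, Nat.add_sub_cancel' h₁]

lemma pref_iff_cat_tail {α : List Λ} {x : ℕ → Λ} : Pref α x ↔ cat α (tail x α.length) = x :=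
  ⟨cat_tail_of_pref, fun h => h ▸ pref_cat α _⟩

lemma pref_append {α β : List Λ} {x : ℕ → Λ} :
    Pref (α ++ β) x ↔ Pref α x ∧ Pref β (tail x α.length) := by
  simp only [pref_iff_cat_tail, cat_append, List.length_append, tail_tail]
  constructor
  · intro h
    have e : tail x α.length = cat β (tail x (α.length + β.length)) := by
      conv_lhs => rw [← h]
      rw [tail_cat]
    exact ⟨by rw [e, h], e.symm⟩
  · rintro ⟨hα, hβ⟩
    rw [hβ, hα]

lemma pref_ofFn (y : ℕ → Λ) (n : ℕ) : Pref (List.ofFn fun i : Fin n => y i) y :=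
  fun _ _ => by simp

lemma eq_of_forall_pref_iff {y y' : ℕ → Λ} (h : ∀ γ, Pref γ y ↔ Pref γ y') : y = y' := by
  funext i
  have := (h _).1 (pref_ofFn y (i + 1)) i (by simp)
  simp only [List.getElem_ofFn] at this
  exact this.symm

variable [TopologicalSpace Λ]

lemma tail_mem {X : Set (ℕ → Λ)} (hX : IsSubshift X) {x : ℕ → Λ}
    (hx : x ∈ X) (n : ℕ) : tail x n ∈ X := by
  induction n with
  | zero => rwa [show tail x 0 = x from funext fun i => by simp [tail]]
  | succ n ih =>
    have e : tail x (n + 1) = shiftMap (tail x n) := by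
      funext i
      simp only [tail, shiftMap]
      congr 1
      omega
    exact e ▸ hX.2.2 _ ih

lemma continuous_cat (α : List Λ) : Continuous (cat α) := by
  refine continuous_pi fun n => ?_
  rcases lt_or_ge n α.length with h | h
  · simp only [cat_eval_lt h]
    exact continuous_const
  · simp only [cat_eval_ge h]
    exact continuous_apply _

lemma isClosed_follower {X : Set (ℕ → Λ)} (hX : IsClosed X) (β : List Λ) :
    IsClosed (follower X β) :=
  hX.inter (hX.preimage (continuous_cat β))

lemma mem_of_forall_pref {C : Set (ℕ → Λ)} (hC : IsClosed C) {y : ℕ → Λ}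
    (h : ∀ γ, Pref γ y → ∃ w ∈ C, Pref γ w) : y ∈ C := by
  choose w hwC hw using fun n => h _ (pref_ofFn y n)
  have hlim : Filter.Tendsto w Filter.atTop (nhds y) := by
    refine tendsto_pi_nhds.2 fun i => tendsto_nhds_of_eventually_eq ?_
    filter_upwards [Filter.eventually_gt_atTop i] with n hn
    rw [hw n i (by simpa using hn), List.getElem_ofFn]
  exact hC.mem_of_tendsto hlim (Filter.Eventually.of_forall hwC)

end Words

section ReducedForm

def posWord (α : List Λ) : List (Λ × Bool) := α.map fun a => (a, true)

def fracWord (α β : List Λ) : List (Λ × Bool) := posWord α ++ FreeGroup.invRev (posWord β)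

def IsReducedForm [DecidableEq Λ] (g : FreeGroup Λ) (α β : List Λ) : Prop :=
  g = wd α * (wd β)⁻¹ ∧ FreeGroup.norm g = α.length + β.length

lemma wd_nil : wd ([] : List Λ) = 1 := rfl

lemma wd_append (α β : List Λ) : wd (α ++ β) = wd α * wd β := by
  simp [wd]

lemma mk_posWord (α : List Λ) : FreeGroup.mk (posWord α) = wd α := by
  induction α with
  | nil => rfl
  | cons a α ih =>
    rw [wd, List.map_cons, List.prod_cons, ← wd, ← ih, FreeGroup.of, FreeGroup.mul_mk]
    rfl

lemma mk_fracWord (α β : List Λ) : FreeGroup.mk (fracWord α β) = wd α * (wd β)⁻¹ := by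
  rw [fracWord, ← FreeGroup.mul_mk, ← FreeGroup.inv_mk, mk_posWord, mk_posWord]

lemma isReduced_of_forall_snd_eq {L : List (Λ × Bool)} {b : Bool} (h : ∀ p ∈ L, p.2 = b) :
    FreeGroup.IsReduced L := by
  refine List.Pairwise.isChain (List.pairwise_of_forall_mem_list fun p hp q hq _ => ?_)
  exact (h p hp).trans (h q hq).symm

lemma isReduced_posWord (α : List Λ) : FreeGroup.IsReduced (posWord α) :=
  isReduced_of_forall_snd_eq (b := true) (by simp [posWord])

lemma isReduced_fracWord {α β : List Λ} (h : ∀ a ∈ α.getLast?, ∀ b ∈ β.getLast?, a ≠ b) :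
    FreeGroup.IsReduced (fracWord α β) := by
  rw [fracWord, FreeGroup.IsReduced, List.isChain_append]
  refine ⟨isReduced_posWord α,
    isReduced_of_forall_snd_eq (b := false) (by simp [posWord, FreeGroup.invRev]), ?_⟩
  simpa [posWord, FreeGroup.invRev] using h

lemma fracWord_inj {α β α' β' : List Λ} (h : fracWord α β = fracWord α' β') :
    α = α' ∧ β = β' := by
  have key : ∀ α β : List Λ, (fracWord α β).filter (·.2) = posWord α := by
    intro α β
    simp [fracWord, posWord, FreeGroup.invRev, List.filter_map, Function.comp_def]
  have posWord_injective : Function.Injective (posWord (Λ := Λ)) :=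
    List.map_injective_iff.2 (Prod.mk_left_injective true)
  have hα : α = α' := posWord_injective (by rw [← key α β, h, key])
  subst hα
  exact ⟨rfl, posWord_injective (FreeGroup.invRev_injective (List.append_cancel_left h))⟩

lemma pairwise_fracWord (α β : List Λ) :
    (fracWord α β).Pairwise fun p q => p.2 = false → q.2 = false := by
  refine List.pairwise_append.2 ⟨List.pairwise_of_forall_mem_list ?_,
    List.pairwise_of_forall_mem_list ?_, ?_⟩ <;> simp [posWord, FreeGroup.invRev]

variable [DecidableEq Λ]

lemma isReducedForm_iff_toWord {g : FreeGroup Λ} {α β : List Λ} :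
    IsReducedForm g α β ↔ g.toWord = fracWord α β := by
  constructor
  · rintro ⟨rfl, hn⟩
    rw [← mk_fracWord, FreeGroup.toWord_mk]
    refine FreeGroup.reduce.red.sublist.eq_of_length ?_
    rw [← FreeGroup.toWord_mk, mk_fracWord]
    simpa [fracWord, posWord, FreeGroup.invRev, FreeGroup.norm] using hn
  · intro h
    refine ⟨by rw [← mk_fracWord, ← h, FreeGroup.mk_toWord], ?_⟩
    rw [FreeGroup.norm, h]
    simp [fracWord, posWord, FreeGroup.invRev]

lemma IsReducedForm.unique {g : FreeGroup Λ} {α β α' β' : List Λ} (h : IsReducedForm g α β)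
    (h' : IsReducedForm g α' β') : α = α' ∧ β = β' :=
  fracWord_inj ((isReducedForm_iff_toWord.1 h).symm.trans (isReducedForm_iff_toWord.1 h'))

lemma isReducedForm_iff_isReduced {α β : List Λ} :
    IsReducedForm (wd α * (wd β)⁻¹) α β ↔ FreeGroup.IsReduced (fracWord α β) := by
  rw [isReducedForm_iff_toWord, ← mk_fracWord, FreeGroup.toWord_mk,
    FreeGroup.isReduced_iff_reduce_eq]

lemma isReducedForm_wd (α : List Λ) : IsReducedForm (wd α) α [] := by
  have h : FreeGroup.IsReduced (fracWord α []) := by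
    simpa [fracWord, posWord, FreeGroup.invRev] using isReduced_posWord α
  simpa only [wd_nil, inv_one, mul_one] using isReducedForm_iff_isReduced.2 h

lemma IsReducedForm.mul_wd {g : FreeGroup Λ} {α γ δ : List Λ} (h : IsReducedForm g α (γ ++ δ)) :
    IsReducedForm (g * wd γ) α δ := by
  have hg : g * wd γ = wd α * (wd δ)⁻¹ := by
    rw [h.1, wd_append]
    group
  rw [hg, isReducedForm_iff_isReduced]
  have hred := isReducedForm_iff_toWord.1 h ▸ FreeGroup.isReduced_toWord
  refine hred.infix ⟨[], FreeGroup.invRev (posWord γ), ?_⟩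
  simp [fracWord, posWord, FreeGroup.invRev]

lemma exists_isReducedForm_wd_mul_inv (α β : List Λ) :
    ∃ α₀ β₀ t, α = α₀ ++ t ∧ β = β₀ ++ t ∧ IsReducedForm (wd α * (wd β)⁻¹) α₀ β₀ := by
  obtain ⟨t, r₁, r₂, h₁, h₂, hne⟩ := exists_common_prefix α.reverse β.reverse
  rw [List.reverse_eq_iff, List.reverse_append] at h₁ h₂
  refine ⟨r₁.reverse, r₂.reverse, t.reverse, h₁, h₂, ?_⟩
  have hg : wd α * (wd β)⁻¹ = wd r₁.reverse * (wd r₂.reverse)⁻¹ := by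
    rw [h₁, h₂, wd_append, wd_append]
    group
  rw [hg, isReducedForm_iff_isReduced]
  exact isReduced_fracWord (by simpa using hne)

lemma IsReducedForm.not_mul_wd_cons {g : FreeGroup Λ} {α δ γ α' β' : List Λ} {d a : Λ}
    (h : IsReducedForm g α (d :: δ)) (had : d ≠ a) : ¬ IsReducedForm (g * wd (a :: γ)) α' β' := by
  intro h'
  have hsplit : fracWord α (d :: δ) = fracWord α δ ++ [(d, false)] := by
    simp [fracWord, posWord, FreeGroup.invRev]
  have hg := isReducedForm_iff_toWord.1 h
  have hword : (g * wd (a :: γ)).toWord = fracWord α δ ++ [(d, false)] ++ posWord (a :: γ) := by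
    rw [← FreeGroup.mk_toWord (x := g), hg, hsplit, ← mk_posWord, FreeGroup.mul_mk,
      FreeGroup.toWord_mk, FreeGroup.isReduced_iff_reduce_eq.1]
    refine FreeGroup.IsReduced.append_overlap (hsplit ▸ hg ▸ FreeGroup.isReduced_toWord) ?_
      (List.cons_ne_nil _ _)
    simpa [posWord, FreeGroup.isReduced_cons_cons, had] using isReduced_posWord (a :: γ)
  -- in the reduced word of any `α' β'⁻¹`, no inverse letter precedes a letter of `Λ`
  have hsorted := pairwise_fracWord α' β'
  rw [← isReducedForm_iff_toWord.1 h', hword, List.pairwise_append] at hsorted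
  simpa [posWord] using hsorted.2.2 (d, false) (by simp) (a, true) (by simp [posWord]) rfl

end ReducedForm

lemma wd_injective : Function.Injective (wd : List Λ → FreeGroup Λ) := by
  classical
  intro α β h
  exact ((h ▸ isReducedForm_wd α : IsReducedForm (wd β) α []).unique (isReducedForm_wd β)).1

lemma isStemAt_iff {ξ : FreeGroup Λ → Bool} {g : FreeGroup Λ} {y : ℕ → Λ} :
    IsStemAt ξ g y ↔ ∀ γ, ξ (g * wd γ) = true ↔ Pref γ y := by
  simp only [IsStemAt, Set.ext_iff, Set.mem_inter_iff, Set.mem_ofPred_eq]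
  constructor
  · intro h γ
    refine ⟨fun hγ => ?_, fun hγ => ((h _).2 ⟨γ, rfl, hγ⟩).1⟩
    obtain ⟨γ', hγ', hpref⟩ := (h _).1 ⟨hγ, γ, rfl⟩
    rwa [wd_injective (mul_left_cancel hγ')]
  · rintro h _
    constructor
    · rintro ⟨hξ, γ, rfl⟩
      exact ⟨γ, rfl, (h γ).1 hξ⟩
    · rintro ⟨γ, rfl, hγ⟩
      exact ⟨(h γ).2 hγ, γ, rfl⟩

lemma IsStemAt.unique {ξ : FreeGroup Λ → Bool} {g : FreeGroup Λ} {y y' : ℕ → Λ}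
    (h : IsStemAt ξ g y) (h' : IsStemAt ξ g y') : y = y' :=
  eq_of_forall_pref_iff fun γ => (isStemAt_iff.1 h γ).symm.trans (isStemAt_iff.1 h' γ)

section Spectrum

variable [DecidableEq Λ] {X : Set (ℕ → Λ)} {x : ℕ → Λ} {g : FreeGroup Λ}

lemma xiB_eq_true : xiB X x g = true ↔ g ∈ xiSet X x := by
  simp [xiB, chi]

lemma exists_xiB_eqOn_of_mem_omega {ξ : FreeGroup Λ → Bool} (hξ : ξ ∈ Omega X)
    (s : Finset (FreeGroup Λ)) : ∃ x ∈ X, ∀ h ∈ s, xiB X x h = ξ h := by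
  have hU : IsOpen {η : FreeGroup Λ → Bool | ∀ h ∈ s, η h = ξ h} := by
    simp only [Set.ofPred_forall]
    refine isOpen_biInter_finset fun h _ => ?_
    exact (isOpen_discrete {ξ h}).preimage (continuous_apply (A := fun _ => Bool) h)
  obtain ⟨_, hη, x, hx, rfl⟩ := mem_closure_iff.1 hξ _ hU fun _ _ => rfl
  exact ⟨x, hx, hη⟩

variable [TopologicalSpace Λ]

lemma mem_xiSet_iff_of_isReducedForm (hX : IsSubshift X) (hx : x ∈ X) {α β : List Λ}
    (hg : IsReducedForm g α β) :
    g ∈ xiSet X x ↔ Pref α x ∧ cat β (tail x α.length) ∈ X := by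
  constructor
  · rintro ⟨α', β', h₁, h₂, hα, -, -, hβ⟩
    obtain ⟨rfl, rfl⟩ := IsReducedForm.unique ⟨h₁, h₂⟩ hg
    exact ⟨hα, hβ⟩
  · rintro ⟨hα, hβ⟩
    exact ⟨α, β, hg.1, hg.2, hα, ⟨tail_mem hX hx _, (cat_tail_of_pref hα).symm ▸ hx⟩,
      tail_mem hX hx _, hβ⟩

lemma mul_wd_mem_xiSet_iff_of_head_ne (hX : IsSubshift X) (hx : x ∈ X) {α δ γ : List Λ}
    (hg : IsReducedForm g α δ) (hα : Pref α x) (hδ : cat δ (tail x α.length) ∈ X)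
    (hne : ∀ d ∈ δ.head?, ∀ a ∈ γ.head?, d ≠ a) :
    g * wd γ ∈ xiSet X x ↔ Pref γ (cat δ (tail x α.length)) := by
  rcases γ with _ | ⟨a, γ⟩
  · simpa [wd_nil, Pref] using (mem_xiSet_iff_of_isReducedForm hX hx hg).2 ⟨hα, hδ⟩
  rcases δ with _ | ⟨d, δ⟩
  · have hga : IsReducedForm (g * wd (a :: γ)) (α ++ a :: γ) [] := by
      rw [hg.1, wd_nil, inv_one, mul_one, ← wd_append]
      exact isReducedForm_wd _
    rw [mem_xiSet_iff_of_isReducedForm hX hx hga, pref_append, cat_nil, cat_nil]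
    simp [hα, tail_mem hX hx]
  · refine iff_of_false (fun ⟨α', β', h₁, h₂, _⟩ => hg.not_mul_wd_cons (hne d rfl a rfl) ⟨h₁, h₂⟩)
      fun h => hne d rfl a rfl (h 0 (Nat.succ_pos _))

lemma mul_wd_mem_xiSet_iff (hX : IsSubshift X) (hx : x ∈ X) {α δ : List Λ}
    (hg : IsReducedForm g α δ) (hα : Pref α x) (hδ : cat δ (tail x α.length) ∈ X) (γ : List Λ) :
    g * wd γ ∈ xiSet X x ↔ Pref γ (cat δ (tail x α.length)) := by
  obtain ⟨t, δ', γ', rfl, rfl, hne⟩ := exists_common_prefix δ γ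
  rw [cat_append] at hδ ⊢
  have hδ' : cat δ' (tail x α.length) ∈ X := by simpa using tail_mem hX hδ t.length
  rw [wd_append, ← mul_assoc, mul_wd_mem_xiSet_iff_of_head_ne hX hx hg.mul_wd hα hδ' hne,
    pref_append, tail_cat]
  exact (and_iff_right (pref_cat _ _)).symm

lemma mul_inv_wd_mem_xiSet_iff (hX : IsSubshift X) (hx : x ∈ X) {α δ : List Λ}
    (hg : IsReducedForm g α δ) (hα : Pref α x) (β : List Λ) :
    g * (wd β)⁻¹ ∈ xiSet X x ↔ cat β (cat δ (tail x α.length)) ∈ X := by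
  obtain ⟨α₀, β₀, t, rfl, hβδ, hred⟩ := exists_isReducedForm_wd_mul_inv α (β ++ δ)
  have hgβ : g * (wd β)⁻¹ = wd (α₀ ++ t) * (wd (β ++ δ))⁻¹ := by
    rw [hg.1, wd_append β]
    group
  rw [pref_append] at hα
  have htail : tail x α₀.length = cat t (tail x (α₀ ++ t).length) := by
    rw [List.length_append, ← tail_tail, cat_tail_of_pref hα.2]
  rw [hgβ, mem_xiSet_iff_of_isReducedForm hX hx hred, ← cat_append, hβδ, cat_append, ← htail]
  exact and_iff_right hα.1

lemma exists_isStemAt_xiB (hX : IsSubshift X) (hx : x ∈ X) (hg : xiB X x g = true) :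
    ∃ w, IsStemAt (xiB X x) g w ∧ ∀ β, xiB X x (g * (wd β)⁻¹) = true ↔ w ∈ follower X β := by
  obtain ⟨α, δ, h₁, h₂, hα, -, -, hδ⟩ := xiB_eq_true.1 hg
  have hg' : IsReducedForm g α δ := ⟨h₁, h₂⟩
  refine ⟨cat δ (tail x α.length), isStemAt_iff.2 fun γ => ?_, fun β => ?_⟩
  · rw [xiB_eq_true]
    exact mul_wd_mem_xiSet_iff hX hx hg' hα hδ γ
  · rw [xiB_eq_true, mul_inv_wd_mem_xiSet_iff hX hx hg' hα, follower, Set.mem_ofPred_eq]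
    exact (and_iff_right hδ).symm

end Spectrum

theorem stem_at_follower_general {Λ : Type} [DecidableEq Λ] [TopologicalSpace Λ]
    (X : Set (ℕ → Λ)) (hX : IsSubshift X)
    (ξ : FreeGroup Λ → Bool) (hξ : ξ ∈ Omega X)
    (g : FreeGroup Λ) (hg : ξ g = true) (β : List Λ) :
    (ξ (g * (wd β)⁻¹) = true → ∀ y : ℕ → Λ, IsStemAt ξ g y → y ∈ follower X β) ∧
    (∀ x ∈ X, ξ = xiB X x →
       (∃ y : ℕ → Λ, IsStemAt ξ g y ∧ y ∈ follower X β) →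
       ξ (g * (wd β)⁻¹) = true) := by
  constructor
  · intro hgβ y hy
    refine mem_of_forall_pref (isClosed_follower hX.2.1 β) fun γ hγ => ?_
    obtain ⟨x, hx, hxξ⟩ := exists_xiB_eqOn_of_mem_omega hξ {g, g * (wd β)⁻¹, g * wd γ}
    obtain ⟨w, hw, hwβ⟩ := exists_isStemAt_xiB hX hx (by rw [hxξ g (by simp)]; exact hg)
    refine ⟨w, (hwβ β).1 (by rw [hxξ _ (by simp)]; exact hgβ), (isStemAt_iff.1 hw γ).1 ?_⟩
    rw [hxξ _ (by simp)]
    exact (isStemAt_iff.1 hy γ).2 hγ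
  · rintro x hx rfl ⟨y, hy, hyβ⟩
    obtain ⟨w, hw, hwβ⟩ := exists_isStemAt_xiB hX hx hg
    exact (hwβ β).2 (hy.unique hw ▸ hyβ)

/-- if `gβ⁻¹ ∈ ξ` then the stem of `ξ` at `g` lies in `F_β`; the converse
holds when `ξ = ξ_x` for some `x ∈ X`. -/
theorem stem_at_follower {Λ : Type} [Fintype Λ] [Nonempty Λ] [DecidableEq Λ]
    [TopologicalSpace Λ] [DiscreteTopology Λ]
    (X : Set (ℕ → Λ)) (hX : IsSubshift X)
    (ξ : FreeGroup Λ → Bool) (hξ : ξ ∈ Omega X)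
    (g : FreeGroup Λ) (hg : ξ g = true) (β : List Λ) :
    (ξ (g * (wd β)⁻¹) = true → ∀ y : ℕ → Λ, IsStemAt ξ g y → y ∈ follower X β) ∧
    (∀ x ∈ X, ξ = xiB X x →
       (∃ y : ℕ → Λ, IsStemAt ξ g y ∧ y ∈ follower X β) →
       ξ (g * (wd β)⁻¹) = true) :=
  stem_at_follower_general X hX ξ hξ g hg β

end SubshiftPaper
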